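/- Let f be a homeomorphism of the torus T² homotopic to a Dehn twist, with lift f̂ to the vertical cylinder A and covering map π : ℝ² → A. For any connected component Γ̃ of π⁻¹(ω(B_S⁻)) ⊂ ℝ², the complement ℝ² ∖ Γ̃ is connected. -/

import Mathlib

/-!
Write `P = π⁻¹(ω(B_S⁻))` and `Γ̃` for a component of `P`. Since `f̂` is a homeomorphism whose
lift moves points a bounded vertical distance, `ω(B_S⁻)` is `f̂`-invariant and contained in
`B_S⁻`: a bounded component of the closed set `B⁻` is cut off inside `B⁻` by a relatively clopen
set lying above some level, and no forward image of an unbounded component can enter it.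

The upper half plane lies in one component of `ℝ² ∖ Γ̃`. Let `θ` be a component missing it.
For every `j ∈ ℤ`, `F^j(θ)` is a component of the complement of `F^j(Γ̃) ⊆ P`, and `F^j` moves
a point of the upper half plane into the upper half plane, so `F^j(θ)` misses the upper half
plane too. Hence every backward iterate of the preconnected set `closure θ ∪ Γ̃` projects into
`B⁻` while meeting `ω(B_S⁻) ⊆ B_S⁻`, so it projects into `B_S⁻`; therefore `closure θ ∪ Γ̃`
lies in `P`, hence in `Γ̃`, which is absurd.
-/

noncomputable section

open MeasureTheory

abbrev Torus := AddCircle (1 : ℝ) × AddCircle (1 : ℝ)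
abbrev Cyl := AddCircle (1 : ℝ) × ℝ

/-- The covering map from the plane to the vertical cylinder. -/
def projCyl (z : ℝ × ℝ) : Cyl := ((z.1 : AddCircle (1 : ℝ)), z.2)

/-- The covering map from the plane to the torus. -/
def projTorus (z : ℝ × ℝ) : Torus := ((z.1 : AddCircle (1 : ℝ)), (z.2 : AddCircle (1 : ℝ)))

/-- A lift to the plane of a torus homeomorphism homotopic to a Dehn twist:
a homeomorphism of the plane commuting with integer horizontal translations and
satisfying the Dehn-twist relation for vertical translations, with twist
coefficient `k > 0`. -/
structure DehnLift where
  F : (ℝ × ℝ) ≃ₜ (ℝ × ℝ)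
  k : ℤ
  k_pos : 0 < k
  horiz : ∀ x y : ℝ, F (x + 1, y) = F (x, y) + (1, 0)
  vert : ∀ x y : ℝ, F (x, y + 1) = F (x, y) + ((k : ℝ), 1)

/-- The vertical rotation set of a cylinder map:
`ρ_V(f̂) = ∩_{i≥1} closure( ∪_{n≥i} { (p₂(f̂ⁿ(ẑ)) − p₂(ẑ))/n : ẑ ∈ A } )`. -/
def rotSet (fhat : Cyl → Cyl) : Set ℝ :=
  ⋂ i : ℕ, closure (⋃ n : ℕ, ⋃ _ : i + 1 ≤ n,
    {r : ℝ | ∃ z : Cyl, r = ((fhat^[n] z).2 - z.2) / n})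

/-- A subset of the cylinder is bounded iff its second-coordinate projection is
a bounded subset of `ℝ`. -/
def VBounded (S : Set Cyl) : Prop := ∃ M : ℝ, ∀ z ∈ S, |z.2| ≤ M

/-- `B⁻ = {ẑ : f̂ⁿ(ẑ) ∈ H⁻ for all n ≥ 0}` where `H⁻ = (ℝ/ℤ)×(−∞,0]`. -/
def Bminus (fhat : Cyl → Cyl) : Set Cyl := {z | ∀ n : ℕ, (fhat^[n] z).2 ≤ 0}

/-- `B⁺ = {ẑ : f̂ⁿ(ẑ) ∈ H⁺ for all n ≥ 0}` where `H⁺ = (ℝ/ℤ)×[0,∞)`. -/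
def Bplus (fhat : Cyl → Cyl) : Set Cyl := {z | ∀ n : ℕ, 0 ≤ (fhat^[n] z).2}

/-- `B_S⁻`: the union of the unbounded connected components of `B⁻`. -/
def BS (fhat : Cyl → Cyl) : Set Cyl :=
  {z | z ∈ Bminus fhat ∧ ¬ VBounded (connectedComponentIn (Bminus fhat) z)}

/-- `B_N⁺`: the union of the unbounded connected components of `B⁺`. -/
def BN (fhat : Cyl → Cyl) : Set Cyl :=
  {z | z ∈ Bplus fhat ∧ ¬ VBounded (connectedComponentIn (Bplus fhat) z)}

/-- The ω-limit set `ω(S) = ∩_{n≥0} closure(∪_{i≥n} f̂ⁱ(S))`. -/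
def omegaSet (fhat : Cyl → Cyl) (S : Set Cyl) : Set Cyl :=
  ⋂ n : ℕ, closure (⋃ i : ℕ, ⋃ _ : n ≤ i, fhat^[i] '' S)

open Set Topology

namespace Homeomorph

variable {X Y : Type*} [TopologicalSpace X] [TopologicalSpace Y]

theorem coe_pow (h : X ≃ₜ X) (n : ℕ) : ⇑(h ^ n) = (⇑h)^[n] := by
  induction n with
  | zero => rfl
  | succ n ih => rw [pow_succ, Function.iterate_succ, ← ih]; rfl

theorem zpow_image_of_image_eq {h : X ≃ₜ X} {s : Set X} (hs : h '' s = s) (j : ℤ) :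
    ⇑(h ^ j) '' s = s := by
  have hinv : ⇑h⁻¹ '' s = s := by
    nth_rw 1 [← hs]; exact h.symm_image_image s
  induction j using Int.induction_on with
  | zero => exact image_id s
  | succ n ih => rw [zpow_add_one, show ⇑(h ^ (n : ℤ) * h) = ⇑(h ^ (n : ℤ)) ∘ h from rfl,
      image_comp, hs, ih]
  | pred n ih => rw [zpow_sub_one, show ⇑(h ^ (-n : ℤ) * h⁻¹) = ⇑(h ^ (-n : ℤ)) ∘ ⇑h⁻¹ from rfl,
      image_comp, hinv, ih]

theorem semiconj_zpow {f : X → Y} {a : X ≃ₜ X} {b : Y ≃ₜ Y} (h : Function.Semiconj f a b) :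
    ∀ j : ℤ, Function.Semiconj f ⇑(a ^ j) ⇑(b ^ j)
  | .ofNat n => by
      simpa only [Int.ofNat_eq_natCast, zpow_natCast, coe_pow] using h.iterate_right n
  | .negSucc n => by
      rw [zpow_negSucc, zpow_negSucc]
      have hn : Function.Semiconj f ⇑(a ^ (n + 1)) ⇑(b ^ (n + 1)) := by
        simpa only [coe_pow] using h.iterate_right (n + 1)
      exact hn.inverses_right (a ^ (n + 1)).apply_symm_apply (b ^ (n + 1)).symm_apply_apply

theorem disjoint_image_connectedComponentIn_compl {G H : Set X} {w : X} (h : X ≃ₜ X)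
    (hH : IsPreconnected H) (hGH : Disjoint (h '' G) H) (hc : ∃ c ∈ H, h c ∈ H)
    (hθ : Disjoint (connectedComponentIn Gᶜ w) H) :
    Disjoint (h '' connectedComponentIn Gᶜ w) H := by
  rw [Set.disjoint_left]
  rintro _ ⟨v, hv, rfl⟩ hvH
  obtain ⟨c, hcH, hhc⟩ := hc
  have hcomp : h '' connectedComponentIn Gᶜ w = connectedComponentIn (h '' G)ᶜ (h v) := by
    rw [connectedComponentIn_eq hv,
      h.image_connectedComponentIn (connectedComponentIn_subset _ _ hv), h.image_compl]
  have : H ⊆ h '' connectedComponentIn Gᶜ w :=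
    hcomp ▸ hH.subset_connectedComponentIn hvH hGH.subset_compl_left
  obtain ⟨c', hc', hc'c⟩ := this hhc
  exact hθ.ne_of_mem hc' hcH (h.injective hc'c)

end Homeomorph

section ConnectedComponents

variable {X : Type*} [TopologicalSpace X]

theorem IsClosed.connectedComponentIn {F : Set X} (hF : IsClosed F) (x : X) :
    IsClosed (connectedComponentIn F x) := by
  by_cases hx : x ∈ F
  · refine isClosed_of_closure_subset ?_
    exact isPreconnected_connectedComponentIn.closure.subset_connectedComponentIn
      (subset_closure (mem_connectedComponentIn hx))
      (closure_minimal (connectedComponentIn_subset _ _) hF)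
  · rw [connectedComponentIn_eq_empty hx]; exact isClosed_empty

theorem closure_connectedComponentIn_compl_subset (G : Set X) (w : X) :
    closure (connectedComponentIn Gᶜ w) ⊆ connectedComponentIn Gᶜ w ∪ G := by
  intro x hx
  by_cases hxG : x ∈ G
  · exact Or.inr hxG
  have hw : w ∈ Gᶜ := connectedComponentIn_nonempty_iff.mp (nonempty_of_mem hx).of_closure
  refine Or.inl ((isPreconnected_connectedComponentIn.subset_closure subset_union_left
    (union_subset subset_closure (singleton_subset_iff.mpr hx))).subset_connectedComponentIn
    (Or.inl (mem_connectedComponentIn hw)) ?_ (Or.inr rfl))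
  exact union_subset (connectedComponentIn_subset _ _) (singleton_subset_iff.mpr hxG)

theorem closure_connectedComponentIn_compl_inter_nonempty [PreconnectedSpace X]
    [LocallyConnectedSpace X] {G : Set X} (hG : IsClosed G) (hG' : G.Nonempty) {w : X}
    (hw : w ∉ G) : (closure (connectedComponentIn Gᶜ w) ∩ G).Nonempty := by
  have hopen : IsOpen (connectedComponentIn Gᶜ w) := hG.isOpen_compl.connectedComponentIn
  obtain ⟨b, hb⟩ := nonempty_frontier_iff.mpr
    ⟨⟨w, mem_connectedComponentIn (show w ∈ Gᶜ from hw)⟩, fun huniv =>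
      absurd hG'.some_mem (connectedComponentIn_subset _ _ (huniv ▸ mem_univ hG'.some))⟩
  rw [hopen.frontier_eq] at hb
  exact ⟨b, hb.1, (closure_connectedComponentIn_compl_subset G w hb.1).resolve_left hb.2⟩

theorem isConnected_compl_of_forall_connectedComponentIn_inter_nonempty {G H : Set X}
    (hH : IsConnected H) (hHG : Disjoint H G)
    (h : ∀ w ∉ G, (connectedComponentIn Gᶜ w ∩ H).Nonempty) : IsConnected Gᶜ := by
  obtain ⟨a, ha⟩ := hH.nonempty
  refine ⟨⟨a, hHG.subset_compl_right ha⟩, isPreconnected_of_forall a fun w hw => ?_⟩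
  exact ⟨connectedComponentIn Gᶜ w ∪ H,
    union_subset (connectedComponentIn_subset _ _) hHG.subset_compl_right, Or.inr ha,
    Or.inl (mem_connectedComponentIn hw),
    isPreconnected_connectedComponentIn.union' (h w hw) hH.isPreconnected⟩

theorem IsPreconnected.subset_inter_of_isClosed_inter {s B W : Set X} (hs : IsPreconnected s)
    (hsB : s ⊆ B) (hW : IsOpen W) (hWB : IsClosed (W ∩ B)) (hsW : (s ∩ W).Nonempty) :
    s ⊆ W ∩ B := by
  by_contra hsub
  obtain ⟨d, hds, hd⟩ := not_subset.mp hsub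
  obtain ⟨x, hxs, hxW, hx⟩ := hs W (W ∩ B)ᶜ hW hWB.isOpen_compl
    (fun y hy => (em (y ∈ W ∩ B)).imp (fun h => h.1) id) hsW ⟨d, hds, hd⟩
  exact hx ⟨hxW, hsB hxs⟩

theorem exists_isClopen_of_disjoint_connectedComponent [CompactSpace X] [T2Space X] {x : X}
    {L : Set X} (hL : IsClosed L) (hxL : Disjoint (connectedComponent x) L) :
    ∃ U, IsClopen U ∧ x ∈ U ∧ Disjoint U L := by
  rw [connectedComponent_eq_iInter_isClopen, Set.disjoint_iff_inter_eq_empty, inter_comm] at hxL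
  obtain ⟨t, ht⟩ := hL.isCompact.elim_finite_subfamily_closed
    (fun U : {U : Set X // IsClopen U ∧ x ∈ U} => (U : Set X)) (fun U => U.2.1.1) hxL
  exact ⟨⋂ U ∈ t, (U : Set X), isClopen_biInter_finset fun U _ => U.2.1,
    mem_iInter₂.mpr fun U _ => U.2.2, Set.disjoint_iff_inter_eq_empty.mpr (by rwa [inter_comm])⟩

end ConnectedComponents

theorem abs_iterate_sub_le {α : Type*} (g : α → α) (φ : α → ℝ) {C : ℝ}
    (hC : ∀ x, |φ (g x) - φ x| ≤ C) (n : ℕ) (x : α) : |φ (g^[n] x) - φ x| ≤ n * C := by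
  induction n with
  | zero => simp
  | succ n ih =>
    rw [Function.iterate_succ_apply', Nat.cast_succ]
    linarith [abs_sub_le (φ (g (g^[n] x))) (φ (g^[n] x)) (φ x), hC (g^[n] x)]

theorem exists_abs_le_of_periodic {φ : ℝ × ℝ → ℝ} (hφ : Continuous φ)
    (h₁ : ∀ x y, φ (x + 1, y) = φ (x, y)) (h₂ : ∀ x y, φ (x, y + 1) = φ (x, y)) :
    ∃ C, ∀ u, |φ u| ≤ C := by
  obtain ⟨C, hC⟩ := (isCompact_Icc.prod isCompact_Icc :
    IsCompact (Icc (0 : ℝ) 1 ×ˢ Icc (0 : ℝ) 1)).exists_bound_of_continuousOn hφ.continuousOn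
  refine ⟨C, fun ⟨x, y⟩ => ?_⟩
  obtain ⟨x', hx', hx⟩ := (show Function.Periodic (fun x => φ (x, y)) 1 from
    fun x => h₁ x y).exists_mem_Ico₀ one_pos x
  obtain ⟨y', hy', hy⟩ := (show Function.Periodic (fun y => φ (x', y)) 1 from
    fun y => h₂ x' y).exists_mem_Ico₀ one_pos y
  rw [hx, hy, ← Real.norm_eq_abs]
  exact hC (x', y') ⟨Ico_subset_Icc_self hx', Ico_subset_Icc_self hy'⟩

section Cylinder

variable {fhat : Cyl → Cyl}

theorem isClosed_Bminus (hf : Continuous fhat) : IsClosed (Bminus fhat) := by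
  simp only [Bminus, ofPred_forall]
  exact isClosed_iInter fun n => isClosed_le (continuous_snd.comp (hf.iterate n)) continuous_const

theorem iterate_mem_Bminus {p : Cyl} (hp : p ∈ Bminus fhat) (i : ℕ) : fhat^[i] p ∈ Bminus fhat :=
  fun n => by rw [← Function.iterate_add_apply]; exact hp (n + i)

theorem omegaSet_subset_Bminus (hf : Continuous fhat) {S : Set Cyl} (hS : S ⊆ Bminus fhat) :
    omegaSet fhat S ⊆ Bminus fhat :=
  (iInter_subset _ 0).trans <| closure_minimal
    (iUnion₂_subset fun i _ => by rintro _ ⟨p, hp, rfl⟩; exact iterate_mem_Bminus (hS hp) i)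
    (isClosed_Bminus hf)

theorem isClosed_omegaSet (S : Set Cyl) : IsClosed (omegaSet fhat S) :=
  isClosed_iInter fun _ => isClosed_closure

theorem image_omegaSet (e : Cyl ≃ₜ Cyl) (S : Set Cyl) : e '' omegaSet e S = omegaSet e S := by
  set U : ℕ → Set Cyl := fun n => ⋃ i, ⋃ (_ : n ≤ i), e^[i] '' S
  have hU : ∀ n, e '' U n = U (n + 1) := by
    intro n
    ext p
    simp only [U, mem_image, mem_iUnion]
    constructor
    · rintro ⟨_, ⟨i, hi, x, hx, rfl⟩, rfl⟩
      exact ⟨i + 1, by omega, x, hx, Function.iterate_succ_apply' _ _ _⟩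
    · rintro ⟨i, hi, x, hx, rfl⟩
      obtain ⟨j, rfl⟩ : ∃ j, i = j + 1 := ⟨i - 1, by omega⟩
      exact ⟨e^[j] x, ⟨j, by omega, x, hx, rfl⟩, (Function.iterate_succ_apply' _ _ _).symm⟩
  have hanti : Antitone fun n => closure (U n) := fun m n hmn =>
    closure_mono (iUnion₂_mono' fun i hi => ⟨i, hmn.trans hi, subset_rfl⟩)
  change e '' ⋂ n, closure (U n) = ⋂ n, closure (U n)
  simp_rw [image_iInter e.bijective, e.image_closure, hU]
  exact hanti.iInter_nat_add 1

theorem IsPreconnected.subset_BS {S : Set Cyl} (hS : IsPreconnected S) (hSB : S ⊆ Bminus fhat)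
    {p : Cyl} (hpS : p ∈ S) (hp : p ∈ BS fhat) : S ⊆ BS fhat := fun q hq => by
  refine ⟨hSB hq, ?_⟩
  rw [← connectedComponentIn_eq (hS.subset_connectedComponentIn hpS hSB hq)]
  exact hp.2

theorem exists_isOpen_isClosed_inter_of_abs_le {B : Set Cyl} (hB : IsClosed B)
    (hB0 : ∀ p ∈ B, p.2 ≤ 0) {q : Cyl} (hq : q ∈ B) {M : ℝ}
    (hM : ∀ p ∈ connectedComponentIn B q, |p.2| ≤ M) :
    ∃ W : Set Cyl, IsOpen W ∧ q ∈ W ∧ IsClosed (W ∩ B) ∧ ∀ p ∈ W ∩ B, -(M + 1) < p.2 := by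
  set Y : Set Cyl := B ∩ {p | -(M + 1) ≤ p.2}
  have hY : IsCompact Y := (isCompact_univ.prod isCompact_Icc).of_isClosed_subset
    (hB.inter (isClosed_le continuous_const continuous_snd)) fun p hp => ⟨trivial, hp.2, hB0 p hp.1⟩
  have : CompactSpace Y := isCompact_iff_compactSpace.mp hY
  have hqM := neg_abs_le q.2
  have hqM' := hM q (mem_connectedComponentIn hq)
  let q' : Y := ⟨q, hq, show -(M + 1) ≤ q.2 by linarith⟩
  have hdisj : Disjoint (connectedComponent q') {p : Y | (p : Cyl).2 = -(M + 1)} := by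
    rw [Set.disjoint_left]
    intro p hp hpM
    have hpB : (p : Cyl) ∈ connectedComponentIn B q := by
      refine connectedComponentIn_mono q (inter_subset_left : Y ⊆ B) ?_
      rw [connectedComponentIn_eq_image q'.2]
      exact mem_image_of_mem _ hp
    have := neg_abs_le (p : Cyl).2
    linarith [hM _ hpB, show (p : Cyl).2 = -(M + 1) from hpM]
  obtain ⟨U, hU, hqU, hUM⟩ := exists_isClopen_of_disjoint_connectedComponent
    (isClosed_eq (continuous_snd.comp continuous_subtype_val) continuous_const) hdisj
  obtain ⟨O, hO, hOU⟩ := isOpen_induced_iff.mp hU.isOpen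
  have hWB : O ∩ {p | -(M + 1) < p.2} ∩ B = Subtype.val '' U := by
    ext p
    constructor
    · rintro ⟨⟨hpO, hpM⟩, hpB⟩
      exact ⟨⟨p, hpB, (le_of_lt hpM : -(M + 1) ≤ p.2)⟩, by rw [← hOU]; exact hpO, rfl⟩
    · rintro ⟨p, hp, rfl⟩
      rw [← hOU] at hp
      refine ⟨⟨hp, (lt_of_le_of_ne p.2.2 ?_ : -(M + 1) < (p : Cyl).2)⟩, p.2.1⟩
      exact fun h => Set.disjoint_left.mp hUM (hOU ▸ hp) h.symm
  refine ⟨O ∩ {p | -(M + 1) < p.2}, hO.inter (isOpen_lt continuous_const continuous_snd),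
    ⟨(hOU ▸ hqU : q' ∈ Subtype.val ⁻¹' O), show -(M + 1) < q.2 by linarith⟩, ?_,
    fun p hp => hp.1.2⟩
  rw [hWB]
  exact (hU.isClosed.isCompact.image continuous_subtype_val).isClosed

theorem omegaSet_BS_subset_BS_of_abs_snd_sub_le (hf : Continuous fhat) {C : ℝ}
    (hC : ∀ p : Cyl, |(fhat p).2 - p.2| ≤ C) : omegaSet fhat (BS fhat) ⊆ BS fhat := by
  intro q hq
  have hqB := omegaSet_subset_Bminus hf (fun _ h => h.1) hq
  refine ⟨hqB, fun ⟨M, hM⟩ => ?_⟩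
  obtain ⟨W, hW, hqW, hWB, hWM⟩ :=
    exists_isOpen_isClosed_inter_of_abs_le (isClosed_Bminus hf) (fun p hp => hp 0) hqB hM
  obtain ⟨_, hW', hmem⟩ := mem_closure_iff.mp (mem_iInter.mp hq 0) W hW hqW
  obtain ⟨i, -, b, hb, rfl⟩ := mem_iUnion₂.mp hmem
  have hD : fhat^[i] '' connectedComponentIn (Bminus fhat) b ⊆ W ∩ Bminus fhat := by
    refine (isPreconnected_connectedComponentIn.image _ (hf.iterate i).continuousOn)
      |>.subset_inter_of_isClosed_inter ?_ hW hWB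
        ⟨_, mem_image_of_mem _ (mem_connectedComponentIn hb.1), hW'⟩
    rintro _ ⟨p, hp, rfl⟩
    exact iterate_mem_Bminus (connectedComponentIn_subset _ _ hp) i
  refine hb.2 ⟨M + 1 + i * C, fun p hp => ?_⟩
  have h1 := hWM _ (hD (mem_image_of_mem _ hp))
  have h2 := (abs_le.mp (abs_iterate_sub_le fhat Prod.snd hC i p)).2
  have h3 : p.2 ≤ 0 := connectedComponentIn_subset _ _ hp 0
  rw [abs_of_nonpos h3]
  linarith

theorem IsPreconnected.subset_omegaSet_BS (e : Cyl ≃ₜ Cyl) (hωBS : omegaSet e (BS e) ⊆ BS e)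
    {S : Set Cyl} (hS : IsPreconnected S) (horb : ∀ j : ℤ, ∀ p ∈ S, ((e ^ j) p).2 ≤ 0)
    (hSω : (S ∩ omegaSet e (BS e)).Nonempty) : S ⊆ omegaSet e (BS e) := by
  obtain ⟨q, hqS, hqω⟩ := hSω
  intro p hp
  refine mem_iInter.mpr fun n => subset_closure (mem_iUnion₂.mpr ⟨n, le_rfl, ?_⟩)
  have hback : ⇑(e ^ (-n : ℤ)) '' S ⊆ BS e := by
    refine (hS.image _ (e ^ (-n : ℤ)).continuous.continuousOn).subset_BS ?_
      (mem_image_of_mem _ hqS) (hωBS ?_)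
    · rintro _ ⟨x, hx, rfl⟩ m
      rw [← Homeomorph.coe_pow, ← Homeomorph.mul_apply, ← zpow_natCast, ← zpow_add]
      exact horb _ x hx
    · rw [← Homeomorph.zpow_image_of_image_eq (image_omegaSet e _) (-n)]
      exact mem_image_of_mem _ hqω
  refine ⟨(e ^ (-n : ℤ)) p, hback (mem_image_of_mem _ hp), ?_⟩
  rw [← Homeomorph.coe_pow, ← Homeomorph.mul_apply, ← zpow_natCast, ← zpow_add, add_neg_cancel,
    zpow_zero, Homeomorph.one_apply]

end Cylinder

theorem isOpenQuotientMap_projCyl : IsOpenQuotientMap projCyl :=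
  (QuotientAddGroup.isOpenQuotientMap_mk (N := AddSubgroup.zmultiples (1 : ℝ))).prodMap
    IsOpenQuotientMap.id

theorem continuous_projCyl : Continuous projCyl := isOpenQuotientMap_projCyl.continuous

theorem projCyl_eq_projCyl_iff {u v : ℝ × ℝ} :
    projCyl u = projCyl v ↔ ∃ m : ℤ, u = v + ((m : ℝ), 0) := by
  rw [projCyl, projCyl, Prod.mk.injEq, ← sub_eq_zero, ← AddCircle.coe_sub,
    AddCircle.coe_eq_zero_iff]
  simp only [zsmul_eq_mul, mul_one, Prod.ext_iff, Prod.fst_add, Prod.snd_add, add_zero]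
  constructor
  · rintro ⟨⟨m, hm⟩, h2⟩
    exact ⟨m, by linarith, h2⟩
  · rintro ⟨m, h1, h2⟩
    exact ⟨⟨m, by linarith⟩, h2⟩

namespace DehnLift

variable (L : DehnLift)

theorem map_add_intCast (x y : ℝ) (m : ℤ) : L.F (x + m, y) = L.F (x, y) + ((m : ℝ), 0) := by
  induction m using Int.induction_on with
  | zero => simp
  | succ n ih =>
    push_cast at ih ⊢
    rw [← add_assoc, L.horiz, ih, add_assoc]
    ext <;> simp
  | pred n ih =>
    have h := L.horiz (x + (-n - 1)) y
    push_cast at ih ⊢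
    rw [show x + (-(n : ℝ) - 1) + 1 = x + -n by ring, ih] at h
    rw [eq_sub_of_add_eq h.symm, add_sub_assoc, Prod.mk_sub_mk, sub_zero]

theorem exists_homeomorph_eq {fhat : Cyl → Cyl} (hfhat : Function.Semiconj projCyl L.F fhat) :
    ∃ e : Cyl ≃ₜ Cyl, ⇑e = fhat := by
  have hsurj : Function.Surjective projCyl := isOpenQuotientMap_projCyl.surjective
  have hcont : Continuous fhat := by
    rw [← isOpenQuotientMap_projCyl.continuous_comp_iff]
    exact (continuous_projCyl.comp L.F.continuous).congr hfhat
  have hopen : IsOpenMap fhat := fun V hV => by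
    have : fhat '' V = projCyl '' (L.F '' (projCyl ⁻¹' V)) := by
      rw [image_image, funext hfhat, ← image_image fhat projCyl, image_preimage_eq V hsurj]
    rw [this]
    exact isOpenQuotientMap_projCyl.isOpenMap _
      (L.F.isOpenMap _ (hV.preimage continuous_projCyl))
  have hinj : Function.Injective fhat := by
    intro p q hpq
    obtain ⟨u, rfl⟩ := hsurj p
    obtain ⟨v, rfl⟩ := hsurj q
    rw [← hfhat, ← hfhat, projCyl_eq_projCyl_iff] at hpq
    obtain ⟨m, hm⟩ := hpq
    rw [← L.map_add_intCast] at hm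
    rw [L.F.injective hm]
    exact projCyl_eq_projCyl_iff.mpr ⟨m, by ext <;> simp⟩
  have hsurj' : Function.Surjective fhat := fun p => by
    obtain ⟨u, rfl⟩ := hsurj p
    exact ⟨projCyl (L.F.symm u), by rw [← hfhat, L.F.apply_symm_apply]⟩
  exact ⟨(Equiv.ofBijective fhat ⟨hinj, hsurj'⟩).toHomeomorphOfContinuousOpen hcont hopen, rfl⟩

theorem exists_abs_snd_sub_le : ∃ C, ∀ u, |(L.F u).2 - u.2| ≤ C :=
  exists_abs_le_of_periodic ((continuous_snd.comp L.F.continuous).sub continuous_snd)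
    (fun x y => by simp [L.horiz]) (fun x y => by simp [L.vert])

theorem exists_snd_pos_zpow_snd_pos (j : ℤ) : ∃ c : ℝ × ℝ, 0 < c.2 ∧ 0 < ((L.F ^ j) c).2 := by
  obtain ⟨C, hC⟩ := L.exists_abs_snd_sub_le
  have hC0 : 0 ≤ C := (abs_nonneg _).trans (hC 0)
  have hpow : ∀ n : ℕ, 0 < ((L.F ^ n) ((0 : ℝ), 1 + n * C)).2 := fun n => by
    have := (abs_le.mp (abs_iterate_sub_le L.F Prod.snd hC n ((0 : ℝ), 1 + n * C))).1
    rw [← Homeomorph.coe_pow] at this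
    dsimp only at this
    linarith
  obtain ⟨n, rfl | rfl⟩ := Int.eq_nat_or_neg j
  · exact ⟨_, show (0 : ℝ) < 1 + n * C by positivity, by rw [zpow_natCast]; exact hpow n⟩
  · refine ⟨(L.F ^ n) ((0 : ℝ), 1 + n * C), hpow n, ?_⟩
    rw [zpow_neg, zpow_natCast, Homeomorph.inv_apply, Homeomorph.symm_apply_apply]
    show (0 : ℝ) < 1 + n * C
    positivity

end DehnLift

section Plane

variable (L : DehnLift) {e : Cyl ≃ₜ Cyl} (he : Function.Semiconj projCyl L.F e)
include he

theorem DehnLift.omegaSet_BS_subset_BS : omegaSet e (BS e) ⊆ BS e := by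
  obtain ⟨C, hC⟩ := L.exists_abs_snd_sub_le
  refine omegaSet_BS_subset_BS_of_abs_snd_sub_le e.continuous (C := C) fun p => ?_
  obtain ⟨u, rfl⟩ := isOpenQuotientMap_projCyl.surjective p
  rw [← he]
  exact hC u

theorem DehnLift.zpow_apply_snd_nonpos {x : ℝ × ℝ} (hx : x ∈ projCyl ⁻¹' omegaSet e (BS e))
    (j : ℤ) : ((L.F ^ j) x).2 ≤ 0 := by
  have hω : (e ^ j) (projCyl x) ∈ omegaSet e (BS e) :=
    Homeomorph.zpow_image_of_image_eq (image_omegaSet e _) j ▸ mem_image_of_mem _ hx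
  rw [← Homeomorph.semiconj_zpow he j x] at hω
  exact omegaSet_subset_Bminus e.continuous (fun _ h => h.1) hω 0

theorem DehnLift.zpow_apply_snd_nonpos_of_disjoint {G : Set (ℝ × ℝ)}
    (hG : G ⊆ projCyl ⁻¹' omegaSet e (BS e)) {w : ℝ × ℝ}
    (hθ : Disjoint (connectedComponentIn Gᶜ w) (univ ×ˢ Ioi 0)) (j : ℤ) {x : ℝ × ℝ}
    (hx : x ∈ connectedComponentIn Gᶜ w) : ((L.F ^ j) x).2 ≤ 0 := by
  have hGj : Disjoint ((L.F ^ j) '' G) (univ ×ˢ Ioi 0) := by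
    rw [Set.disjoint_left]
    rintro _ ⟨y, hy, rfl⟩ ⟨-, hpos⟩
    exact (L.zpow_apply_snd_nonpos he (hG hy) j).not_gt hpos
  have := (L.F ^ j).disjoint_image_connectedComponentIn_compl
    (isPreconnected_univ.prod isPreconnected_Ioi) hGj
    (by simpa using L.exists_snd_pos_zpow_snd_pos j) hθ
  exact not_lt.mp fun hpos => Set.disjoint_left.mp this (mem_image_of_mem _ hx) ⟨trivial, hpos⟩

theorem DehnLift.connectedComponentIn_compl_inter_nonempty {z w : ℝ × ℝ}
    (hz : z ∈ projCyl ⁻¹' omegaSet e (BS e))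
    (hw : w ∉ connectedComponentIn (projCyl ⁻¹' omegaSet e (BS e)) z) :
    (connectedComponentIn (connectedComponentIn (projCyl ⁻¹' omegaSet e (BS e)) z)ᶜ w ∩
      univ ×ˢ Ioi 0).Nonempty := by
  set P := projCyl ⁻¹' omegaSet e (BS e)
  set Γ := connectedComponentIn P z
  set θ := connectedComponentIn Γᶜ w
  by_contra hθ
  rw [not_nonempty_iff_eq_empty, ← disjoint_iff_inter_eq_empty] at hθ
  have hΓP : Γ ⊆ P := connectedComponentIn_subset _ _
  have hzΓ : z ∈ Γ := mem_connectedComponentIn hz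
  have hΓcl : IsClosed Γ :=
    ((isClosed_omegaSet _).preimage continuous_projCyl).connectedComponentIn z
  obtain ⟨b, hbθ, hbΓ⟩ := closure_connectedComponentIn_compl_inter_nonempty hΓcl ⟨z, hzΓ⟩ hw
  have hK : IsPreconnected (closure θ ∪ Γ) :=
    isPreconnected_connectedComponentIn.closure.union b hbθ hbΓ isPreconnected_connectedComponentIn
  have hKorb : ∀ j : ℤ, ∀ x ∈ closure θ ∪ Γ, ((L.F ^ j) x).2 ≤ 0 := by
    rintro j x (hx | hx)
    · rcases closure_connectedComponentIn_compl_subset Γ w hx with hx | hx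
      · exact L.zpow_apply_snd_nonpos_of_disjoint he hΓP hθ j hx
      · exact L.zpow_apply_snd_nonpos he (hΓP hx) j
    · exact L.zpow_apply_snd_nonpos he (hΓP hx) j
  have hKP : closure θ ∪ Γ ⊆ P := by
    refine image_subset_iff.mp <| (hK.image _ continuous_projCyl.continuousOn).subset_omegaSet_BS
      e (L.omegaSet_BS_subset_BS he) ?_ ⟨projCyl z, mem_image_of_mem _ (Or.inr hzΓ), hz⟩
    rintro j _ ⟨x, hx, rfl⟩
    rw [← Homeomorph.semiconj_zpow he j x]
    exact hKorb j x hx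
  exact hw (hK.subset_connectedComponentIn (Or.inr hzΓ) hKP
    (Or.inl (subset_closure (mem_connectedComponentIn hw))))

end Plane

/-- For any connected component `Γ̃` of `π⁻¹(ω(B_S⁻)) ⊆ ℝ²`, the
complement `ℝ² ∖ Γ̃` is connected. -/
theorem complement_of_component_of_preimage_omega_BS_connected
    (L : DehnLift) (fhat : Cyl → Cyl)
    (hfhat : ∀ z : ℝ × ℝ, projCyl (L.F z) = fhat (projCyl z)) :
    ∀ z ∈ projCyl ⁻¹' omegaSet fhat (BS fhat),
      IsConnected
        (connectedComponentIn (projCyl ⁻¹' omegaSet fhat (BS fhat)) z)ᶜ := by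
  obtain ⟨e, rfl⟩ := L.exists_homeomorph_eq hfhat
  intro z hz
  refine isConnected_compl_of_forall_connectedComponentIn_inter_nonempty
    (isConnected_univ.prod isConnected_Ioi) ?_
    fun w hw => L.connectedComponentIn_compl_inter_nonempty hfhat hz hw
  rw [Set.disjoint_left]
  rintro x ⟨-, hpos⟩ hx
  exact (L.zpow_apply_snd_nonpos hfhat (connectedComponentIn_subset _ _ hx) 0).not_gt hpos
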